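/- Let f ∈ X, let f̄ ∈ X be the constant matrix each of whose entries equals (1/N²) Σ_{i,j=1}^N f_{ij}, and let f₀ = f − f̄ ∈ G_d. Let D_d = {y ∈ G_d : T_d°(y) ≤ 1}, where T_d° is the dual norm of T_d on G_d. Then the set of minimizers over X of x ↦ J_d(f − x) + J_d*(x) equals the set of minimizers over D_d of v ↦ T_d(f₀ − v). -/
import Mathlib



open scoped BigOperators

/-- First component of the discrete gradient: `(∇u)¹_{ij} = u_{i+1,j} − u_{ij}` for
`i < N` and `0` for `i = N`. -/
noncomputable def gradX {N : ℕ} (u : Matrix (Fin N) (Fin N) ℝ) (i j : Fin N) : ℝ :=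
  if h : (i : ℕ) + 1 < N then u ⟨(i : ℕ) + 1, h⟩ j - u i j else 0

/-- Second component of the discrete gradient: `(∇u)²_{ij} = u_{i,j+1} − u_{ij}` for
`j < N` and `0` for `j = N`. -/
noncomputable def gradY {N : ℕ} (u : Matrix (Fin N) (Fin N) ℝ) (i j : Fin N) : ℝ :=
  if h : (j : ℕ) + 1 < N then u i ⟨(j : ℕ) + 1, h⟩ - u i j else 0

/-- Discrete total variation `J_d(u) = Σ_{i,j} ‖(∇u)_{ij}‖`
(Euclidean norm on `ℝ²`). -/
noncomputable def Jd {N : ℕ} (u : Matrix (Fin N) (Fin N) ℝ) : ℝ :=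
  ∑ i, ∑ j, Real.sqrt (gradX u i j ^ 2 + gradY u i j ^ 2)

/-- The subspace `G_d = {u ∈ X : Σ_{i,j} u_{ij} = 0}`. -/
def Gd (N : ℕ) : Set (Matrix (Fin N) (Fin N) ℝ) :=
  {u | ∑ i, ∑ j, u i j = 0}

/-- Inner product on `X = ℝ^{N×N}`: `⟨u, v⟩ = Σ_{i,j} u_{ij} v_{ij}`. -/
def minner {N : ℕ} (u v : Matrix (Fin N) (Fin N) ℝ) : ℝ :=
  ∑ i, ∑ j, u i j * v i j

/-- Legendre transform of `J_d` over `X`: `J_d*(y) = sup {⟨y, w⟩ − J_d(w) : w ∈ X}`. -/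
noncomputable def JdStar {N : ℕ} (y : Matrix (Fin N) (Fin N) ℝ) : EReal :=
  ⨆ w : Matrix (Fin N) (Fin N) ℝ, ((minner y w - Jd w : ℝ) : EReal)

/-- Legendre transform of the restriction `T_d` of `J_d` to `G_d`:
`T_d*(y) = sup {⟨y, w⟩ − J_d(w) : w ∈ G_d}`. -/
noncomputable def TdStar {N : ℕ} (y : Matrix (Fin N) (Fin N) ℝ) : EReal :=
  ⨆ w : Gd N, ((minner y (w : Matrix (Fin N) (Fin N) ℝ)
      - Jd (w : Matrix (Fin N) (Fin N) ℝ) : ℝ) : EReal)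


/-- Dual norm of `T_d` on `G_d`: `T_d°(y) = max {⟨x, y⟩ : x ∈ G_d, T_d(x) ≤ 1}`. -/
noncomputable def TdDual {N : ℕ} (y : Matrix (Fin N) (Fin N) ℝ) : ℝ :=
  sSup {r : ℝ | ∃ x : Matrix (Fin N) (Fin N) ℝ, x ∈ Gd N ∧ Jd x ≤ 1 ∧ r = minner x y}

/-- The set `D_d = {y ∈ G_d : T_d°(y) ≤ 1}`. -/
noncomputable def Dd (N : ℕ) : Set (Matrix (Fin N) (Fin N) ℝ) :=
  {y | y ∈ Gd N ∧ TdDual y ≤ 1}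

-- test aux lemmas part 1
section Aux
variable {N : ℕ}

lemma Jd_nonneg (u : Matrix (Fin N) (Fin N) ℝ) : 0 ≤ Jd u := by
  unfold Jd
  refine Finset.sum_nonneg fun i _ => Finset.sum_nonneg fun j _ => Real.sqrt_nonneg _

lemma gradX_addc (u : Matrix (Fin N) (Fin N) ℝ) (c : ℝ) :
    gradX (fun i j => u i j + c) = gradX u := by
  funext i j
  unfold gradX
  split_ifs with h
  · ring
  · rfl

lemma gradY_addc (u : Matrix (Fin N) (Fin N) ℝ) (c : ℝ) :
    gradY (fun i j => u i j + c) = gradY u := by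
  funext i j
  unfold gradY
  split_ifs with h
  · ring
  · rfl

lemma Jd_addc (u : Matrix (Fin N) (Fin N) ℝ) (c : ℝ) :
    Jd (fun i j => u i j + c) = Jd u := by
  unfold Jd
  rw [gradX_addc, gradY_addc]

lemma Jd_const (c : ℝ) : Jd (fun _ _ => c : Matrix (Fin N) (Fin N) ℝ) = 0 := by
  unfold Jd gradX gradY
  simp

lemma Jd_zero : Jd (0 : Matrix (Fin N) (Fin N) ℝ) = 0 := Jd_const 0

lemma gradX_smul (t : ℝ) (u : Matrix (Fin N) (Fin N) ℝ) (i j : Fin N) :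
    gradX (t • u) i j = t * gradX u i j := by
  unfold gradX
  split_ifs with h
  · simp only [Matrix.smul_apply, smul_eq_mul]; ring
  · ring

lemma gradY_smul (t : ℝ) (u : Matrix (Fin N) (Fin N) ℝ) (i j : Fin N) :
    gradY (t • u) i j = t * gradY u i j := by
  unfold gradY
  split_ifs with h
  · simp only [Matrix.smul_apply, smul_eq_mul]; ring
  · ring

lemma Jd_smul (t : ℝ) (u : Matrix (Fin N) (Fin N) ℝ) :
    Jd (t • u) = |t| * Jd u := by
  unfold Jd
  rw [Finset.mul_sum]
  refine Finset.sum_congr rfl fun i _ => ?_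
  rw [Finset.mul_sum]
  refine Finset.sum_congr rfl fun j _ => ?_
  rw [gradX_smul, gradY_smul]
  have h : (t * gradX u i j) ^ 2 + (t * gradY u i j) ^ 2
      = t ^ 2 * (gradX u i j ^ 2 + gradY u i j ^ 2) := by ring
  rw [h, Real.sqrt_mul (sq_nonneg t), Real.sqrt_sq_eq_abs]

lemma abs_gradX_le (u : Matrix (Fin N) (Fin N) ℝ) (i j : Fin N) :
    |gradX u i j| ≤ Jd u := by
  have h1 : |gradX u i j| ≤ Real.sqrt (gradX u i j ^ 2 + gradY u i j ^ 2) := by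
    rw [← Real.sqrt_sq_eq_abs]
    exact Real.sqrt_le_sqrt (le_add_of_nonneg_right (sq_nonneg _))
  refine h1.trans ?_
  unfold Jd
  have h2 : Real.sqrt (gradX u i j ^ 2 + gradY u i j ^ 2)
      ≤ ∑ j', Real.sqrt (gradX u i j' ^ 2 + gradY u i j' ^ 2) :=
    Finset.single_le_sum (f := fun j' => Real.sqrt (gradX u i j' ^ 2 + gradY u i j' ^ 2))
      (fun j' _ => Real.sqrt_nonneg _) (Finset.mem_univ j)
  refine h2.trans ?_
  exact Finset.single_le_sum
    (f := fun i' => ∑ j', Real.sqrt (gradX u i' j' ^ 2 + gradY u i' j' ^ 2))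
    (fun i' _ => Finset.sum_nonneg fun j' _ => Real.sqrt_nonneg _) (Finset.mem_univ i)

lemma abs_gradY_le (u : Matrix (Fin N) (Fin N) ℝ) (i j : Fin N) :
    |gradY u i j| ≤ Jd u := by
  have h1 : |gradY u i j| ≤ Real.sqrt (gradX u i j ^ 2 + gradY u i j ^ 2) := by
    rw [← Real.sqrt_sq_eq_abs]
    exact Real.sqrt_le_sqrt (le_add_of_nonneg_left (sq_nonneg _))
  refine h1.trans ?_
  unfold Jd
  have h2 : Real.sqrt (gradX u i j ^ 2 + gradY u i j ^ 2)
      ≤ ∑ j', Real.sqrt (gradX u i j' ^ 2 + gradY u i j' ^ 2) :=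
    Finset.single_le_sum (f := fun j' => Real.sqrt (gradX u i j' ^ 2 + gradY u i j' ^ 2))
      (fun j' _ => Real.sqrt_nonneg _) (Finset.mem_univ j)
  refine h2.trans ?_
  exact Finset.single_le_sum
    (f := fun i' => ∑ j', Real.sqrt (gradX u i' j' ^ 2 + gradY u i' j' ^ 2))
    (fun i' _ => Finset.sum_nonneg fun j' _ => Real.sqrt_nonneg _) (Finset.mem_univ i)

end Aux

section Aux2
variable {N : ℕ}

lemma vert_bound (hN : 0 < N) (u : Matrix (Fin N) (Fin N) ℝ) (j : Fin N) :
    ∀ k (hk : k < N), |u ⟨k, hk⟩ j - u ⟨0, hN⟩ j| ≤ (k : ℝ) * Jd u := by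
  intro k
  induction k with
  | zero =>
    intro hk
    simp
  | succ k ih =>
    intro hk
    have hk' : k < N := Nat.lt_of_succ_lt hk
    have hg : u ⟨k + 1, hk⟩ j - u ⟨k, hk'⟩ j = gradX u ⟨k, hk'⟩ j := by
      unfold gradX
      rw [dif_pos hk]
    calc |u ⟨k + 1, hk⟩ j - u ⟨0, hN⟩ j|
        ≤ |u ⟨k + 1, hk⟩ j - u ⟨k, hk'⟩ j| + |u ⟨k, hk'⟩ j - u ⟨0, hN⟩ j| :=
          abs_sub_le _ _ _
      _ ≤ Jd u + (k : ℝ) * Jd u := add_le_add (hg ▸ abs_gradX_le u _ j) (ih hk')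
      _ = ((k + 1 : ℕ) : ℝ) * Jd u := by push_cast; ring

lemma horiz_bound (hN : 0 < N) (u : Matrix (Fin N) (Fin N) ℝ) (i : Fin N) :
    ∀ k (hk : k < N), |u i ⟨k, hk⟩ - u i ⟨0, hN⟩| ≤ (k : ℝ) * Jd u := by
  intro k
  induction k with
  | zero =>
    intro hk
    simp
  | succ k ih =>
    intro hk
    have hk' : k < N := Nat.lt_of_succ_lt hk
    have hg : u i ⟨k + 1, hk⟩ - u i ⟨k, hk'⟩ = gradY u i ⟨k, hk'⟩ := by
      unfold gradY
      rw [dif_pos hk]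
    calc |u i ⟨k + 1, hk⟩ - u i ⟨0, hN⟩|
        ≤ |u i ⟨k + 1, hk⟩ - u i ⟨k, hk'⟩| + |u i ⟨k, hk'⟩ - u i ⟨0, hN⟩| :=
          abs_sub_le _ _ _
      _ ≤ Jd u + (k : ℝ) * Jd u := add_le_add (hg ▸ abs_gradY_le u i _) (ih hk')
      _ = ((k + 1 : ℕ) : ℝ) * Jd u := by push_cast; ring

lemma diff_bound (hN : 0 < N) (u : Matrix (Fin N) (Fin N) ℝ) (i j : Fin N) :
    |u i j - u ⟨0, hN⟩ ⟨0, hN⟩| ≤ 2 * (N : ℝ) * Jd u := by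
  have h1 : |u i j - u i ⟨0, hN⟩| ≤ (j : ℝ) * Jd u := by
    have := horiz_bound hN u i j.val j.isLt
    simpa using this
  have h2 : |u i ⟨0, hN⟩ - u ⟨0, hN⟩ ⟨0, hN⟩| ≤ (i : ℝ) * Jd u := by
    have := vert_bound hN u ⟨0, hN⟩ i.val i.isLt
    simpa using this
  have hJ := Jd_nonneg u
  have hi : (i : ℝ) ≤ N := le_of_lt (by exact_mod_cast i.isLt)
  have hj : (j : ℝ) ≤ N := le_of_lt (by exact_mod_cast j.isLt)
  calc |u i j - u ⟨0, hN⟩ ⟨0, hN⟩|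
      ≤ |u i j - u i ⟨0, hN⟩| + |u i ⟨0, hN⟩ - u ⟨0, hN⟩ ⟨0, hN⟩| := abs_sub_le _ _ _
    _ ≤ (j : ℝ) * Jd u + (i : ℝ) * Jd u := add_le_add h1 h2
    _ ≤ (N : ℝ) * Jd u + (N : ℝ) * Jd u :=
        add_le_add (mul_le_mul_of_nonneg_right hj hJ) (mul_le_mul_of_nonneg_right hi hJ)
    _ = 2 * (N : ℝ) * Jd u := by ring

end Aux2

section Aux3
variable {N : ℕ}

lemma minner_comm (u v : Matrix (Fin N) (Fin N) ℝ) : minner u v = minner v u := by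
  unfold minner; simp_rw [mul_comm]

lemma minner_zero_right (u : Matrix (Fin N) (Fin N) ℝ) : minner u 0 = 0 := by
  simp [minner]

lemma minner_smul_right (t : ℝ) (u w : Matrix (Fin N) (Fin N) ℝ) :
    minner u (t • w) = t * minner u w := by
  unfold minner
  simp_rw [Matrix.smul_apply, smul_eq_mul, Finset.mul_sum]
  congr 1; funext i; congr 1; funext j; ring

lemma minner_sub_right (x u v : Matrix (Fin N) (Fin N) ℝ) :
    minner x (u - v) = minner x u - minner x v := by
  unfold minner
  simp_rw [Matrix.sub_apply, mul_sub, Finset.sum_sub_distrib]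

lemma minner_const_right (u : Matrix (Fin N) (Fin N) ℝ) (c : ℝ) :
    minner u (fun _ _ => c) = (∑ i, ∑ j, u i j) * c := by
  unfold minner
  simp_rw [← Finset.sum_mul]

lemma entry_bound (hN : 0 < N) (u : Matrix (Fin N) (Fin N) ℝ) (hu : u ∈ Gd N)
    (i j : Fin N) : |u i j| ≤ 4 * (N : ℝ) * Jd u := by
  set z : Fin N := ⟨0, hN⟩ with hz
  have h0 : (∑ a, ∑ b, u a b : ℝ) = 0 := hu
  have hsum : ∑ a : Fin N, ∑ b : Fin N, (u z z - u a b) = (N : ℝ) ^ 2 * u z z := by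
    simp [Finset.sum_sub_distrib, h0, Finset.sum_const, Finset.card_univ]
    ring
  have hNpos : (0:ℝ) < (N : ℝ) ^ 2 := by positivity
  have habs : (N : ℝ) ^ 2 * |u z z| ≤ (N : ℝ) ^ 2 * (2 * (N : ℝ) * Jd u) := by
    calc (N : ℝ) ^ 2 * |u z z| = |(N : ℝ) ^ 2 * u z z| := by
          rw [abs_mul, abs_of_nonneg hNpos.le]
      _ = |∑ a : Fin N, ∑ b : Fin N, (u z z - u a b)| := by rw [hsum]
      _ ≤ ∑ a : Fin N, ∑ b : Fin N, |u z z - u a b| := by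
          refine (Finset.abs_sum_le_sum_abs _ _).trans ?_
          exact Finset.sum_le_sum fun a _ => Finset.abs_sum_le_sum_abs _ _
      _ ≤ ∑ _a : Fin N, ∑ _b : Fin N, 2 * (N : ℝ) * Jd u := by
          refine Finset.sum_le_sum fun a _ => Finset.sum_le_sum fun b _ => ?_
          rw [abs_sub_comm]
          exact diff_bound hN u a b
      _ = (N : ℝ) ^ 2 * (2 * (N : ℝ) * Jd u) := by
          simp [Finset.sum_const, Finset.card_univ]
          ring
  have h00 : |u z z| ≤ 2 * (N : ℝ) * Jd u := le_of_mul_le_mul_left habs hNpos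
  have : u i j = (u i j - u z z) + u z z := by ring
  calc |u i j| ≤ |u i j - u z z| + |u z z| := by
        nth_rewrite 1 [this]; exact abs_add_le _ _
    _ ≤ 2 * (N : ℝ) * Jd u + 2 * (N : ℝ) * Jd u :=
        add_le_add (diff_bound hN u i j) h00
    _ = 4 * (N : ℝ) * Jd u := by ring

lemma eq_zero_of_Jd_eq_zero (hN : 0 < N) (u : Matrix (Fin N) (Fin N) ℝ)
    (hu : u ∈ Gd N) (h : Jd u = 0) : u = 0 := by
  funext i j
  have hb := entry_bound hN u hu i j
  rw [h] at hb
  simp only [mul_zero] at hb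
  have : u i j = 0 := abs_nonpos_iff.mp hb
  simpa using this

end Aux3

section Aux4
variable {N : ℕ}

lemma JdStar_eq_zero (x : Matrix (Fin N) (Fin N) ℝ)
    (hx : ∀ w, minner x w ≤ Jd w) : JdStar x = 0 := by
  unfold JdStar
  apply le_antisymm
  · refine iSup_le fun w => ?_
    have : minner x w - Jd w ≤ 0 := sub_nonpos.mpr (hx w)
    exact_mod_cast this
  · have h0 : ((minner x (0 : Matrix (Fin N) (Fin N) ℝ)
        - Jd (0 : Matrix (Fin N) (Fin N) ℝ) : ℝ) : EReal) = 0 := by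
      rw [minner_zero_right, Jd_zero (N := N)]; norm_num
    exact h0 ▸ le_iSup (fun w => ((minner x w - Jd w : ℝ) : EReal)) 0

lemma JdStar_eq_top (x : Matrix (Fin N) (Fin N) ℝ)
    (w : Matrix (Fin N) (Fin N) ℝ) (hw : Jd w < minner x w) : JdStar x = ⊤ := by
  unfold JdStar
  rw [iSup_eq_top]
  intro b hb
  induction b using EReal.rec with
  | bot => exact ⟨0, EReal.bot_lt_coe _⟩
  | coe r =>
    set δ : ℝ := minner x w - Jd w with hδ
    have hδpos : 0 < δ := sub_pos.mpr hw
    set t : ℝ := max 0 ((r + 1) / δ) with ht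
    have htn : 0 ≤ t := le_max_left _ _
    refine ⟨t • w, ?_⟩
    have hval : minner x (t • w) - Jd (t • w) = t * δ := by
      rw [minner_smul_right, Jd_smul, abs_of_nonneg htn, hδ]; ring
    rw [hval]
    have h1 : r + 1 ≤ t * δ := by
      have h2 : (r + 1) / δ ≤ t := le_max_right _ _
      calc r + 1 = ((r + 1) / δ) * δ := by field_simp
        _ ≤ t * δ := mul_le_mul_of_nonneg_right h2 hδpos.le
    have : (r : ℝ) < t * δ := by linarith
    exact_mod_cast this
  | top => exact absurd hb (lt_irrefl ⊤)

lemma K_iff_Dd (hN : 0 < N) (x : Matrix (Fin N) (Fin N) ℝ) :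
    (∀ w, minner x w ≤ Jd w) ↔ x ∈ Dd N := by
  constructor
  · intro hx
    have hsum : (∑ i, ∑ j, x i j : ℝ) = 0 := by
      have h1 := hx (fun _ _ => (1 : ℝ))
      have h2 := hx (fun _ _ => (-1 : ℝ))
      rw [minner_const_right, Jd_const] at h1
      rw [minner_const_right, Jd_const] at h2
      linarith
    refine ⟨hsum, ?_⟩
    refine Real.sSup_le (fun r hr => ?_) zero_le_one
    obtain ⟨u, hu, hJu, rfl⟩ := hr
    calc minner u x = minner x u := minner_comm u x
      _ ≤ Jd u := hx u
      _ ≤ 1 := hJu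
  · rintro ⟨hxG, hxD⟩ w
    have hxG' : (∑ i, ∑ j, x i j : ℝ) = 0 := hxG
    have hNne : ((N : ℝ) ^ 2) ≠ 0 := by positivity
    set c : ℝ := (∑ i, ∑ j, w i j) / (N : ℝ) ^ 2 with hc
    obtain ⟨w₀, hw₀⟩ : ∃ w₀ : Matrix (Fin N) (Fin N) ℝ,
        w₀ = fun i j => w i j - c := ⟨_, rfl⟩
    have hsum₀ : (∑ i, ∑ j, w₀ i j : ℝ) = 0 := by
      rw [hw₀]
      simp only [Finset.sum_sub_distrib, Finset.sum_const, Finset.card_univ,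
        Fintype.card_fin, nsmul_eq_mul, hc]
      field_simp
      ring
    have hw₀G : w₀ ∈ Gd N := hsum₀
    have hJw : Jd w₀ = Jd w := by
      have he : (fun i j => w₀ i j + c) = w := by
        funext i j; rw [hw₀]; ring
      calc Jd w₀ = Jd (fun i j => w₀ i j + c) := (Jd_addc w₀ c).symm
        _ = Jd w := by rw [he]
    have hmw : minner x w₀ = minner x w := by
      unfold minner
      rw [hw₀]
      have : ∑ i, ∑ j, x i j * (w i j - c)
          = (∑ i, ∑ j, x i j * w i j) - (∑ i, ∑ j, x i j) * c := by
        simp_rw [mul_sub, Finset.sum_sub_distrib, Finset.sum_mul]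
      rw [this, hxG']
      ring
    rw [← hmw, ← hJw]
    rcases eq_or_lt_of_le (Jd_nonneg w₀) with h0 | hpos
    · have hz : w₀ = 0 := eq_zero_of_Jd_eq_zero hN w₀ hw₀G h0.symm
      rw [hz, minner_zero_right]
      exact Jd_nonneg 0
    · have hx' : ((Jd w₀)⁻¹ • w₀) ∈ Gd N := by
        show (∑ i, ∑ j, ((Jd w₀)⁻¹ • w₀) i j : ℝ) = 0
        simp_rw [Matrix.smul_apply, smul_eq_mul, ← Finset.mul_sum]
        rw [hsum₀, mul_zero]
      have hJx' : Jd ((Jd w₀)⁻¹ • w₀) ≤ 1 := by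
        rw [Jd_smul, abs_of_nonneg (inv_nonneg.mpr (Jd_nonneg w₀)),
          inv_mul_cancel₀ (ne_of_gt hpos)]
      have hmem : minner ((Jd w₀)⁻¹ • w₀) x ∈
          {r : ℝ | ∃ u : Matrix (Fin N) (Fin N) ℝ, u ∈ Gd N ∧ Jd u ≤ 1 ∧ r = minner u x} :=
        ⟨(Jd w₀)⁻¹ • w₀, hx', hJx', rfl⟩
      have hbdd : BddAbove
          {r : ℝ | ∃ u : Matrix (Fin N) (Fin N) ℝ, u ∈ Gd N ∧ Jd u ≤ 1 ∧ r = minner u x} := by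
        refine ⟨4 * (N : ℝ) * ∑ i, ∑ j, |x i j|, fun r hr => ?_⟩
        obtain ⟨u, huG, hJu, rfl⟩ := hr
        have hNr : (0:ℝ) ≤ (N : ℝ) := Nat.cast_nonneg N
        calc minner u x ≤ ∑ i, ∑ j, |u i j * x i j| :=
              Finset.sum_le_sum fun i _ => Finset.sum_le_sum fun j _ => le_abs_self _
          _ ≤ ∑ i, ∑ j, 4 * (N : ℝ) * |x i j| := by
              refine Finset.sum_le_sum fun i _ => Finset.sum_le_sum fun j _ => ?_
              rw [abs_mul]
              refine mul_le_mul_of_nonneg_right ?_ (abs_nonneg _)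
              refine (entry_bound hN u huG i j).trans ?_
              nlinarith [Jd_nonneg u]
          _ = 4 * (N : ℝ) * ∑ i, ∑ j, |x i j| := by
              simp_rw [Finset.mul_sum]
      have hTd : TdDual x = sSup
          {r : ℝ | ∃ u : Matrix (Fin N) (Fin N) ℝ, u ∈ Gd N ∧ Jd u ≤ 1 ∧ r = minner u x} := rfl
      have hle : minner ((Jd w₀)⁻¹ • w₀) x ≤ 1 := by
        refine (le_csSup hbdd hmem).trans ?_
        rw [← hTd]; exact hxD
      rw [minner_comm, minner_smul_right] at hle
      have hmc : minner x w₀ = minner w₀ x := minner_comm x w₀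
      calc minner x w₀ = Jd w₀ * ((Jd w₀)⁻¹ * minner x w₀) := by
            field_simp
        _ ≤ Jd w₀ * 1 := mul_le_mul_of_nonneg_left hle hpos.le
        _ = Jd w₀ := mul_one _

end Aux4


/-- Let `f ∈ X`, let `f̄` be the constant matrix each of whose entries
equals `(1/N²) Σ_{i,j} f_{ij}`, and `f₀ = f − f̄ ∈ G_d`. Then the set of minimizers over
`X` of `x ↦ J_d(f − x) + J_d*(x)` equals the set of minimizers over `D_d` of
`v ↦ T_d(f₀ − v)`. -/
theorem stmt_6 {N : ℕ} (hN : 1 ≤ N) (f : Matrix (Fin N) (Fin N) ℝ)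
    (fbar : Matrix (Fin N) (Fin N) ℝ)
    (hfbar : ∀ i j, fbar i j = (∑ k, ∑ l, f k l) / (N : ℝ) ^ 2)
    (f₀ : Matrix (Fin N) (Fin N) ℝ) (hf₀ : f₀ = f - fbar) :
    {x : Matrix (Fin N) (Fin N) ℝ | ∀ z : Matrix (Fin N) (Fin N) ℝ,
        (↑(Jd (f - x)) : EReal) + JdStar x ≤ (↑(Jd (f - z)) : EReal) + JdStar z}
      = {v : Matrix (Fin N) (Fin N) ℝ | v ∈ Dd N ∧ ∀ z ∈ Dd N,
          Jd (f₀ - v) ≤ Jd (f₀ - z)} := by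
  have hN0 : 0 < N := hN
  have hJfx : ∀ x : Matrix (Fin N) (Fin N) ℝ, Jd (f - x) = Jd (f₀ - x) := by
    intro x
    have he : (fun i j => (f₀ - x) i j + (∑ k, ∑ l, f k l) / (N : ℝ) ^ 2) = f - x := by
      funext i j
      simp only [hf₀, Matrix.sub_apply, hfbar i j]
      ring
    rw [← he, Jd_addc]
  have hK0 : ∀ w, minner (0 : Matrix (Fin N) (Fin N) ℝ) w ≤ Jd w := fun w => by
    rw [minner_comm, minner_zero_right]
    exact Jd_nonneg w
  ext x
  simp only [Set.mem_setOf_eq]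
  constructor
  · intro h
    have hxK : ∀ w, minner x w ≤ Jd w := by
      by_contra hc
      push_neg at hc
      obtain ⟨w, hw⟩ := hc
      have h0 := h 0
      rw [JdStar_eq_top x w hw, JdStar_eq_zero 0 hK0, add_zero, EReal.coe_add_top] at h0
      exact (EReal.coe_lt_top _).not_ge h0
    have hxD : x ∈ Dd N := (K_iff_Dd hN0 x).mp hxK
    refine ⟨hxD, fun z hz => ?_⟩
    have hzK := (K_iff_Dd hN0 z).mpr hz
    have hzz := h z
    rw [JdStar_eq_zero x hxK, JdStar_eq_zero z hzK, add_zero, add_zero] at hzz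
    have h2 : Jd (f - x) ≤ Jd (f - z) := by exact_mod_cast hzz
    rw [hJfx x, hJfx z] at h2
    exact h2
  · rintro ⟨hxD, hmin⟩ z
    have hxK := (K_iff_Dd hN0 x).mpr hxD
    rw [JdStar_eq_zero x hxK, add_zero]
    by_cases hzK : ∀ w, minner z w ≤ Jd w
    · rw [JdStar_eq_zero z hzK, add_zero]
      have hzD := (K_iff_Dd hN0 z).mp hzK
      have h3 := hmin z hzD
      rw [← hJfx x, ← hJfx z] at h3
      exact_mod_cast h3
    · push_neg at hzK
      obtain ⟨w, hw⟩ := hzK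
      rw [JdStar_eq_top z w hw, EReal.coe_add_top]
      exact le_top
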